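/- arXiv:2406.18969 — 3 statements merged into one kernel-verified Lean document; each statement's English description precedes it below -/
import Mathlib

section
/- Let P ⊂ ℝ^n be an n-dimensional lattice polytope, i ∈ {1,…,n}, C ∈ ℤ with u_i + C ≥ 0 for every u ∈ P, and P_i := {(u,h) ∈ ℝ^n × ℝ : u ∈ P, 0 ≤ h ≤ u_i + C} the rooftop polytope. Suppose E, E_i ∈ ℝ[X] are polynomials with deg E ≤ n, deg E_i ≤ n+1, E(0) = E_i(0) = 1, E(k) = #(kP ∩ ℤ^n) and E_i(k) = #(kP_i ∩ ℤ^{n+1}) for every positive integer k. Then there is a polynomial Q ∈ ℝ[X] of degree at most n such that for every positive integer k the i-th coordinate of Bc_k(P) equals Q(k)/E(k); in particular each coordinate of Bc_k(P) is a ratio of two polynomials in k of degree at most n. -/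
open scoped BigOperators
open MeasureTheory Polynomial Filter

noncomputable section

/-- A point of `ℝ^n` is a lattice point if all its coordinates are integers. -/
def isLatticePoint (n : ℕ) (u : Fin n → ℝ) : Prop := ∀ i, ∃ z : ℤ, u i = (z : ℝ)

/-- The set of lattice points of a subset `S ⊆ ℝ^n`. -/
def latticePts (n : ℕ) (S : Set (Fin n → ℝ)) : Set (Fin n → ℝ) :=
  {u ∈ S | isLatticePoint n u}

/-- The dilation `kS = {k • x : x ∈ S}`. -/
def dilate (n : ℕ) (k : ℕ) (S : Set (Fin n → ℝ)) : Set (Fin n → ℝ) :=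
  (fun x => (k : ℝ) • x) '' S

/-- A lattice polytope: the convex hull of a nonempty finite set of lattice points. -/
def IsLatticePolytope (n : ℕ) (P : Set (Fin n → ℝ)) : Prop :=
  ∃ V : Finset (Fin n → ℝ), V.Nonempty ∧ (∀ v ∈ V, isLatticePoint n v) ∧
    P = convexHull ℝ (V : Set (Fin n → ℝ))

/-- `P` is full-dimensional (`n`-dimensional) iff it has nonempty interior. -/
def IsFullDim (n : ℕ) (P : Set (Fin n → ℝ)) : Prop := (interior P).Nonempty

/-- The `k`-th quantized barycenter
`Bc_k(P) = (1/(k·#(kP ∩ ℤ^n))) · Σ_{u ∈ kP ∩ ℤ^n} u`. -/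
def Bck (n k : ℕ) (P : Set (Fin n → ℝ)) : Fin n → ℝ :=
  ((k : ℝ) * ((latticePts n (dilate n k P)).ncard : ℝ))⁻¹ •
    ∑ᶠ u ∈ latticePts n (dilate n k P), u

/-- The barycenter `Bc(P) = (∫_P x dx)/vol(P)`. -/
def Bc (n : ℕ) (P : Set (Fin n → ℝ)) : Fin n → ℝ :=
  fun i => (∫ x in P, x i) / (volume P).toReal

/-- The rooftop polytope over `P` with roof function `f`. -/
def rooftop (n : ℕ) (P : Set (Fin n → ℝ)) (f : (Fin n → ℝ) → ℝ) : Set (Fin (n+1) → ℝ) :=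
  {w | ∃ u ∈ P, ∃ h : ℝ, 0 ≤ h ∧ h ≤ f u ∧ w = Fin.snoc u h}

open Pointwise in
lemma latticePts_finite' (n : ℕ) (S : Set (Fin n → ℝ)) (hS : Bornology.IsBounded S) :
    (latticePts n S).Finite := by
  obtain ⟨R, hR⟩ := hS.exists_norm_le
  apply Set.Finite.of_finite_image (f := fun u (j : Fin n) => ⌊u j⌋)
  · apply Set.Finite.subset (Set.finite_Icc (fun _ => (-⌈R⌉ : ℤ)) (fun _ => ⌈R⌉))
    rintro v ⟨u, ⟨hu, hlat⟩, rfl⟩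
    have key : ∀ j, (⌊u j⌋ : ℝ) = u j := by
      intro j; obtain ⟨z, hz⟩ := hlat j; rw [hz, Int.floor_intCast]
    have habs : ∀ j, |u j| ≤ R := fun j => by
      have h1 := norm_le_pi_norm u j
      have h2 := hR u hu
      rw [Real.norm_eq_abs] at h1; linarith
    constructor <;> intro j
    · have h1 : -(⌈R⌉ : ℝ) ≤ (⌊u j⌋ : ℝ) := by
        rw [key]
        have := Int.le_ceil R
        linarith [(abs_le.mp (habs j)).1]
      exact_mod_cast h1
    · have h1 : (⌊u j⌋ : ℝ) ≤ (⌈R⌉ : ℝ) := by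
        rw [key]
        have := Int.le_ceil R
        linarith [(abs_le.mp (habs j)).2]
      exact_mod_cast h1
  · intro u hu v hv h
    funext j
    obtain ⟨z, hz⟩ := hu.2 j
    obtain ⟨w, hw⟩ := hv.2 j
    have := congrFun h j
    simp only at this
    rw [hz, hw, Int.floor_intCast, Int.floor_intCast] at this
    rw [hz, hw, this]

open Pointwise in
lemma dilate_bounded' (n k : ℕ) (S : Set (Fin n → ℝ)) (hS : Bornology.IsBounded S) :
    Bornology.IsBounded (dilate n k S) := by
  have : dilate n k S = (k : ℝ) • S := (Set.image_smul).symm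
  rw [this]; exact hS.smul₀ _

lemma polytope_bounded' (n : ℕ) (P : Set (Fin n → ℝ)) (hP : IsLatticePolytope n P) :
    Bornology.IsBounded P := by
  obtain ⟨V, -, -, rfl⟩ := hP
  exact isBounded_convexHull.mpr (V.finite_toSet.isBounded)

lemma rooftop_bounded' (n : ℕ) (P : Set (Fin n → ℝ)) (hP : Bornology.IsBounded P)
    (i : Fin n) (c : ℝ) :
    Bornology.IsBounded (rooftop n P (fun u => u i + c)) := by
  obtain ⟨R, hR⟩ := hP.exists_norm_le
  rw [isBounded_iff_forall_norm_le]
  refine ⟨|R| + |c|, ?_⟩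
  rintro w ⟨u, hu, h, h0, hhc, rfl⟩
  simp only at hhc
  have hRu := hR u hu
  have hnn : (0:ℝ) ≤ |R| + |c| := by positivity
  rw [pi_norm_le_iff_of_nonneg hnn]
  intro j
  refine Fin.lastCases ?_ ?_ j
  · rw [Fin.snoc_last, Real.norm_eq_abs, abs_le]
    have h1 : |u i| ≤ R := le_trans (by simpa [Real.norm_eq_abs] using norm_le_pi_norm u i) hRu
    have := abs_le.mp h1
    constructor <;> [linarith [abs_nonneg c, le_abs_self R]; linarith [le_abs_self c, le_abs_self R]]
  · intro j
    rw [Fin.snoc_castSucc]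
    have h1 : ‖u j‖ ≤ R := le_trans (norm_le_pi_norm u j) hRu
    calc ‖u j‖ ≤ R := h1
    _ ≤ |R| + |c| := by nlinarith [le_abs_self R, abs_nonneg c]

lemma count_rooftop' (n k : ℕ) (hk : 0 < k) (P : Set (Fin n → ℝ)) (i : Fin n) (C : ℤ)
    (hC : ∀ u ∈ P, 0 ≤ u i + (C : ℝ))
    (hA : (latticePts n (dilate n k P)).Finite) :
    ((latticePts (n+1) (dilate (n+1) k (rooftop n P (fun u => u i + (C : ℝ))))).ncard : ℝ)
      = ∑ u ∈ hA.toFinset, (u i + (k : ℝ) * C + 1) := by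
  have hk0 : (k : ℝ) ≠ 0 := Nat.cast_ne_zero.mpr hk.ne'
  have hkpos : (0:ℝ) < k := Nat.cast_pos.mpr hk
  set M : (Fin n → ℝ) → ℤ := fun u => ⌊u i⌋ + k * C with hM
  have hMcast : ∀ u ∈ latticePts n (dilate n k P), (M u : ℝ) = u i + (k:ℝ) * C := by
    rintro u ⟨-, hlat⟩
    obtain ⟨z, hz⟩ := hlat i
    simp [hM, hz, Int.floor_intCast]
  have hMnn : ∀ u ∈ latticePts n (dilate n k P), 0 ≤ M u := by
    rintro u hu
    obtain ⟨⟨x, hx, rfl⟩, -⟩ := id hu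
    have h1 : (M ((k:ℝ) • x) : ℝ) = ((k:ℝ) • x) i + (k:ℝ) * C := hMcast _ hu
    have h2 : ((k:ℝ) • x) i + (k:ℝ) * C = (k:ℝ) * (x i + C) := by
      simp [Pi.smul_apply]; ring
    have h3 : (0:ℝ) ≤ (M ((k:ℝ) • x) : ℝ) := by
      rw [h1, h2]; exact mul_nonneg hkpos.le (hC x hx)
    exact_mod_cast h3
  set Bf : Finset (Fin (n+1) → ℝ) :=
    hA.toFinset.biUnion (fun u => (Finset.Icc (0:ℤ) (M u)).image
      (fun m : ℤ => (Fin.snoc u ((m : ℝ)) : Fin (n+1) → ℝ))) with hBf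
  have hseteq : latticePts (n+1) (dilate (n+1) k (rooftop n P (fun u => u i + (C : ℝ)))) = ↑Bf := by
    ext w
    simp only [hBf, Finset.coe_biUnion, Set.mem_iUnion, Finset.mem_coe, Finset.mem_image,
      Finset.mem_Icc, Set.Finite.mem_toFinset, exists_prop]
    constructor
    · rintro ⟨⟨y, ⟨x, hx, h, h0, hhc, rfl⟩, rfl⟩, hlat⟩
      simp only at hhc
      beta_reduce at hlat ⊢
      set u : Fin n → ℝ := (k:ℝ) • x with hu
      have hcoo : ∀ j : Fin n, ((k:ℝ) • (Fin.snoc x h : Fin (n+1) → ℝ)) (Fin.castSucc j) = u j := by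
        intro j; simp [Fin.snoc_castSucc, hu]
      have huA : u ∈ latticePts n (dilate n k P) := by
        refine ⟨⟨x, hx, rfl⟩, fun j => ?_⟩
        obtain ⟨z, hz⟩ := hlat (Fin.castSucc j)
        exact ⟨z, by rw [← hcoo j, hz]⟩
      obtain ⟨m, hm⟩ := hlat (Fin.last n)
      have hlast : ((k:ℝ) • (Fin.snoc x h : Fin (n+1) → ℝ)) (Fin.last n) = (k:ℝ) * h := by
        simp [Fin.snoc_last]
      have hmval : (m : ℝ) = (k:ℝ) * h := by rw [← hm, hlast]
      refine ⟨u, huA, m, ⟨?_, ?_⟩, ?_⟩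
      · have : (0:ℝ) ≤ (m:ℝ) := by rw [hmval]; exact mul_nonneg hkpos.le h0
        exact_mod_cast this
      · have h1 : (m:ℝ) ≤ (M u : ℝ) := by
          rw [hmval, hMcast u huA]
          have : u i + (k:ℝ)*C = (k:ℝ) * (x i + C) := by simp [hu, Pi.smul_apply]; ring
          rw [this]
          exact mul_le_mul_of_nonneg_left hhc hkpos.le
        exact_mod_cast h1
      · funext j
        refine Fin.lastCases ?_ ?_ j
        · rw [Fin.snoc_last, hmval, hlast]
        · intro j; rw [Fin.snoc_castSucc, hcoo j]
    · rintro ⟨u, huA, m, ⟨hm0, hmM⟩, rfl⟩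
      obtain ⟨⟨x, hx, rfl⟩, hlat⟩ := huA
      constructor
      · refine ⟨Fin.snoc x ((m:ℝ)/k), ⟨x, hx, (m:ℝ)/k, ?_, ?_, rfl⟩, ?_⟩
        · positivity
        · rw [div_le_iff₀ hkpos]
          have h1 : (m:ℝ) ≤ (M ((k:ℝ)•x) : ℝ) := by exact_mod_cast hmM
          rw [hMcast _ ⟨⟨x, hx, rfl⟩, hlat⟩] at h1
          beta_reduce at h1 ⊢
          have h3 : ((k:ℝ)•x) i = (k:ℝ) * x i := by simp [Pi.smul_apply]
          rw [h3] at h1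
          show (m:ℝ) ≤ (x i + (C:ℝ)) * (k:ℝ)
          nlinarith
        · funext j
          refine Fin.lastCases ?_ ?_ j
          · simp [Fin.snoc_last, mul_div_cancel₀ _ hk0]
          · intro j; simp [Fin.snoc_castSucc]
      · intro j
        refine Fin.lastCases ?_ ?_ j
        · exact ⟨m, by rw [Fin.snoc_last]⟩
        · intro j
          obtain ⟨z, hz⟩ := hlat j
          exact ⟨z, by rw [Fin.snoc_castSucc, hz]⟩
  rw [hseteq, Set.ncard_coe_finset]
  have hdisj : ∀ u ∈ hA.toFinset, ∀ v ∈ hA.toFinset, u ≠ v →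
      Disjoint ((Finset.Icc (0:ℤ) (M u)).image (fun m : ℤ => (Fin.snoc u ((m : ℝ)) : Fin (n+1) → ℝ)))
        ((Finset.Icc (0:ℤ) (M v)).image (fun m : ℤ => (Fin.snoc v ((m : ℝ)) : Fin (n+1) → ℝ))) := by
    intro u hu v hv huv
    rw [Finset.disjoint_left]
    rintro w hw1 hw2
    obtain ⟨m, -, rfl⟩ := Finset.mem_image.mp hw1
    obtain ⟨m', -, heq⟩ := Finset.mem_image.mp hw2
    apply huv
    funext j
    apply Eq.symm
    have := congrFun heq (Fin.castSucc j)
    rwa [Fin.snoc_castSucc, Fin.snoc_castSucc] at this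
  rw [hBf, Finset.card_biUnion hdisj]
  push_cast
  refine Finset.sum_congr rfl (fun u hu => ?_)
  have huA := hA.mem_toFinset.mp hu
  rw [Finset.card_image_of_injective _ (fun a b hab => by
    have := congrFun hab (Fin.last n)
    rw [Fin.snoc_last, Fin.snoc_last] at this
    exact_mod_cast this)]
  rw [Int.card_Icc]
  rw [← hMcast u huA]
  have hnn := hMnn u huA
  have h2 : ((M u + 1 - 0).toNat : ℤ) = M u + 1 := by omega
  exact_mod_cast congrArg (fun z : ℤ => (z : ℝ)) h2

/-- given the Ehrhart polynomials `E` of `P` and `E_i` of the rooftop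
polytope `P_i`, each coordinate of `Bc_k(P)` is a ratio `Q(k)/E(k)` of polynomials of
degree at most `n`. -/

theorem Bck_rational
    (n : ℕ) (P : Set (Fin n → ℝ))
    (hP : IsLatticePolytope n P) (hdim : IsFullDim n P)
    (i : Fin n) (C : ℤ) (hC : ∀ u ∈ P, 0 ≤ u i + (C : ℝ))
    (E Ei : Polynomial ℝ)
    (hEdeg : E.natDegree ≤ n) (hEideg : Ei.natDegree ≤ n + 1)
    (hE0 : E.eval 0 = 1) (hEi0 : Ei.eval 0 = 1)
    (hE : ∀ k : ℕ, 0 < k → E.eval (k : ℝ) = ((latticePts n (dilate n k P)).ncard : ℝ))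
    (hEi : ∀ k : ℕ, 0 < k →
      Ei.eval (k : ℝ)
        = ((latticePts (n+1)
            (dilate (n+1) k (rooftop n P (fun u => u i + (C : ℝ))))).ncard : ℝ)) :
    ∃ Q : Polynomial ℝ, Q.natDegree ≤ n ∧
      ∀ k : ℕ, 0 < k → Bck n k P i = Q.eval (k : ℝ) / E.eval (k : ℝ) := by
  classical
  have hPb : Bornology.IsBounded P := polytope_bounded' n P hP
  -- the polynomial R
  set R : Polynomial ℝ := Ei - (Polynomial.C (C:ℝ) * Polynomial.X + 1) * E with hR
  have hR0 : R.coeff 0 = 0 := by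
    rw [Polynomial.coeff_zero_eq_eval_zero]
    simp [hR, hE0, hEi0]
  obtain ⟨Q, hQ⟩ : Polynomial.X ∣ R := Polynomial.X_dvd_iff.mpr hR0
  have hRdeg : R.natDegree ≤ n + 1 := by
    refine le_trans (Polynomial.natDegree_sub_le _ _) (max_le hEideg ?_)
    refine le_trans (Polynomial.natDegree_mul_le) ?_
    have h1 : (Polynomial.C (C:ℝ) * Polynomial.X + 1).natDegree ≤ 1 := by
      compute_degree
    omega
  have hQdeg : Q.natDegree ≤ n := by
    rcases eq_or_ne Q 0 with h | h
    · simp [h]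
    · have hx : (Polynomial.X : Polynomial ℝ) ≠ 0 := Polynomial.X_ne_zero
      have := Polynomial.natDegree_mul hx h
      rw [← hQ, Polynomial.natDegree_X] at this
      omega
  refine ⟨Q, hQdeg, fun k hk => ?_⟩
  have hk0 : (k : ℝ) ≠ 0 := Nat.cast_ne_zero.mpr hk.ne'
  have hA : (latticePts n (dilate n k P)).Finite :=
    latticePts_finite' n _ (dilate_bounded' n k P hPb)
  -- the sum identity
  have hcount := count_rooftop' n k hk P i C hC hA
  have hEk := hE k hk
  have hEik := hEi k hk
  have hcard : ((latticePts n (dilate n k P)).ncard : ℝ) = (hA.toFinset.card : ℝ) := by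
    rw [← Set.ncard_coe_finset, Set.Finite.coe_toFinset]
  have hsum : ∑ u ∈ hA.toFinset, u i = R.eval (k : ℝ) := by
    have h1 : Ei.eval (k:ℝ) = ∑ u ∈ hA.toFinset, (u i + (k : ℝ) * C + 1) := by
      rw [hEik, hcount]
    have h2 : ∑ u ∈ hA.toFinset, (u i + (k : ℝ) * C + 1)
        = (∑ u ∈ hA.toFinset, u i) + (hA.toFinset.card : ℝ) * ((k:ℝ) * C + 1) := by
      rw [Finset.sum_add_distrib, Finset.sum_add_distrib, Finset.sum_const, Finset.sum_const]
      push_cast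
      ring
    simp only [hR, Polynomial.eval_sub, Polynomial.eval_mul, Polynomial.eval_add,
      Polynomial.eval_one, Polynomial.eval_C, Polynomial.eval_X]
    rw [hEk, hcard] at *
    rw [h1, h2]
    ring
  have hRk : R.eval (k:ℝ) = (k:ℝ) * Q.eval (k:ℝ) := by
    rw [hQ, Polynomial.eval_mul, Polynomial.eval_X]
  -- compute Bck
  have hfs : (∑ᶠ u ∈ latticePts n (dilate n k P), u) = ∑ u ∈ hA.toFinset, u := by
    exact finsum_mem_eq_finite_toFinset_sum (fun u => u) hA
  have hBck : Bck n k P i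
      = ((k:ℝ) * ((latticePts n (dilate n k P)).ncard : ℝ))⁻¹ * ∑ u ∈ hA.toFinset, u i := by
    rw [Bck, hfs, Pi.smul_apply, smul_eq_mul, Finset.sum_apply]
  rw [hBck, hsum, hRk, ← hEk]
  rcases eq_or_ne (E.eval (k:ℝ)) 0 with hE0' | hE0'
  · rw [hE0']
    simp
  · field_simp
end
end

section
/- Let P ⊂ ℝ^n be an n-dimensional lattice polytope, i ∈ {1,…,n}, C ∈ ℤ with u_i + C ≥ 0 on P, and P_i := {(u,h) ∈ ℝ^n × ℝ : u ∈ P, 0 ≤ h ≤ u_i + C} the rooftop polytope. Suppose E, E_i ∈ ℝ[X] satisfy deg E ≤ n, deg E_i ≤ n+1, E(k) = #(kP ∩ ℤ^n) and E_i(k) = #(kP_i ∩ ℤ^{n+1}) for all positive integers k, and the coefficient a_n of X^n in E is nonzero. Write a_{n−1} for the coefficient of X^{n−1} in E, and c_{n+1}, c_n for the coefficients of X^{n+1}, X^n in E_i. Then the i-th coordinate Bc_{k,i}(P) of Bc_k(P) satisfies lim_{k→∞} Bc_{k,i}(P) = c_{n+1}/a_n − C, and lim_{k→∞} k·(Bc_{k,i}(P)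 − (c_{n+1}/a_n − C)) = c_n/a_n − c_{n+1}·a_{n−1}/a_n² − 1. -/
open scoped BigOperators
open MeasureTheory Polynomial Filter

noncomputable section

lemma latticePts_finite_of_bounded {n : ℕ} {S : Set (Fin n → ℝ)}
    (h : ∃ r : ℝ, ∀ u ∈ S, ‖u‖ ≤ r) : (latticePts n S).Finite := by
  obtain ⟨r, hr⟩ := h
  set M : ℤ := ⌈r⌉
  have : latticePts n S ⊆ (fun z : Fin n → ℤ => fun j => ((z j : ℝ))) ''
      Set.Icc (fun _ => -M) (fun _ => M) := by
    rintro u ⟨huS, hu⟩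
    refine ⟨fun j => (hu j).choose, ?_, ?_⟩
    · constructor <;> intro j
      · have h1 : |u j| ≤ r := (Real.norm_eq_abs _ ▸ norm_le_pi_norm u j).trans (hr u huS)
        have h2 : ((hu j).choose : ℝ) = u j := ((hu j).choose_spec).symm
        have : -(M:ℝ) ≤ ((hu j).choose : ℝ) := by
          rw [h2]; push_cast [M]
          linarith [abs_le.1 h1, Int.le_ceil r]
        exact_mod_cast this
      · have h1 : |u j| ≤ r := (Real.norm_eq_abs _ ▸ norm_le_pi_norm u j).trans (hr u huS)
        have h2 : ((hu j).choose : ℝ) = u j := ((hu j).choose_spec).symm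
        have : ((hu j).choose : ℝ) ≤ (M:ℝ) := by
          rw [h2]; push_cast [M]
          linarith [abs_le.1 h1, Int.le_ceil r]
        exact_mod_cast this
    · funext j; exact ((hu j).choose_spec).symm
  exact Set.Finite.subset ((Set.finite_Icc _ _).image _) this

lemma dilate_bounded {n k : ℕ} {P : Set (Fin n → ℝ)} (hP : IsLatticePolytope n P) :
    ∃ r : ℝ, ∀ u ∈ dilate n k P, ‖u‖ ≤ r := by
  obtain ⟨V, hVne, -, rfl⟩ := hP
  obtain ⟨r, hr⟩ := isBounded_iff_forall_norm_le.1 (Set.Finite.isBounded V.finite_toSet)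
  refine ⟨(k:ℝ) * r, ?_⟩
  rintro u ⟨x, hx, rfl⟩
  have hxr : ‖x‖ ≤ r := by
    have : (V : Set (Fin n → ℝ)) ⊆ Metric.closedBall 0 r := fun v hv =>
      mem_closedBall_zero_iff.2 (hr v hv)
    have := convexHull_min this (convex_closedBall (0 : Fin n → ℝ) r) hx
    exact mem_closedBall_zero_iff.1 this
  rw [norm_smul]
  simp only [Real.norm_natCast]
  exact mul_le_mul_of_nonneg_left hxr (by positivity)

lemma dilate_lattice_nonempty {n k : ℕ} {P : Set (Fin n → ℝ)} (hP : IsLatticePolytope n P) :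
    (latticePts n (dilate n k P)).Nonempty := by
  obtain ⟨V, ⟨v, hv⟩, hlat, rfl⟩ := hP
  refine ⟨(k:ℝ) • v, ⟨v, subset_convexHull ℝ _ hv, rfl⟩, fun j => ?_⟩
  obtain ⟨z, hz⟩ := hlat v hv j
  exact ⟨k * z, by simp only [Pi.smul_apply, hz, smul_eq_mul]; push_cast; ring⟩

lemma smul_snoc {n : ℕ} (c : ℝ) (u : Fin n → ℝ) (h : ℝ) :
    c • (Fin.snoc u h : Fin (n+1) → ℝ) = (Fin.snoc (c • u) (c * h) : Fin (n+1) → ℝ) := by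
  funext j
  refine Fin.lastCases ?_ (fun j => ?_) j
  · simp [Fin.snoc_last]
  · simp [Fin.snoc_castSucc]

lemma dilate_rooftop {n k : ℕ} (hk : 0 < k) (P : Set (Fin n → ℝ)) (i : Fin n) (C : ℤ) :
    dilate (n+1) k (rooftop n P (fun u => u i + (C:ℝ)))
      = rooftop n (dilate n k P) (fun v => v i + (k:ℝ)*C) := by
  have hk0 : (k:ℝ) ≠ 0 := by positivity
  ext w
  constructor
  · rintro ⟨w', ⟨u, hu, h, hh0, hhf, rfl⟩, rfl⟩
    refine ⟨(k:ℝ) • u, ⟨u, hu, rfl⟩, (k:ℝ)*h, by positivity, ?_, smul_snoc _ _ _⟩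
    simp only [Pi.smul_apply, smul_eq_mul]
    have hkpos : (0:ℝ) < k := by positivity
    simp only at hhf
    nlinarith
  · rintro ⟨v, ⟨u, hu, rfl⟩, g, hg0, hgf, rfl⟩
    refine ⟨Fin.snoc u (g / k), ⟨u, hu, g/k, by positivity, ?_, rfl⟩, ?_⟩
    · rw [div_le_iff₀ (by positivity)]
      simp only [Pi.smul_apply, smul_eq_mul] at hgf
      simp only []
      nlinarith
    · show (k:ℝ) • (Fin.snoc u (g/k) : Fin (n+1) → ℝ) = _
      rw [smul_snoc, mul_div_cancel₀ _ hk0]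

lemma rooftop_count {n : ℕ} {P : Set (Fin n → ℝ)} (hP : IsLatticePolytope n P)
    (i : Fin n) (C : ℤ) (hC : ∀ u ∈ P, 0 ≤ u i + (C : ℝ)) {k : ℕ} (hk : 0 < k) :
    ((latticePts (n+1) (dilate (n+1) k (rooftop n P (fun u => u i + (C:ℝ))))).ncard : ℝ)
      = (∑ᶠ u ∈ latticePts n (dilate n k P), u) i
        + ((k:ℝ)*C + 1) * ((latticePts n (dilate n k P)).ncard : ℝ) := by
  have hfin : (latticePts n (dilate n k P)).Finite :=
    latticePts_finite_of_bounded (dilate_bounded hP)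
  set F : Finset (Fin n → ℝ) := hfin.toFinset with hFdef
  have hF : (F : Set (Fin n → ℝ)) = latticePts n (dilate n k P) := hfin.coe_toFinset
  -- value of roof on lattice points
  set N : (Fin n → ℝ) → ℕ := fun u => (⌊u i⌋ + k*C).toNat with hNdef
  have hN : ∀ u ∈ F, ((N u : ℝ)) = u i + (k:ℝ)*C := by
    intro u hu
    rw [hFdef, Set.Finite.mem_toFinset] at hu
    obtain ⟨⟨p, hp, rfl⟩, hlat⟩ := hu
    obtain ⟨z, hz⟩ := hlat i
    have hzi : ((k:ℝ) • p) i = (z:ℝ) := hz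
    have hpos : (0:ℝ) ≤ ((k:ℝ) • p) i + (k:ℝ)*C := by
      have := hC p hp
      simp only [Pi.smul_apply, smul_eq_mul]
      have hk' : (0:ℝ) < k := by exact_mod_cast hk
      nlinarith
    have hznn : 0 ≤ z + (k:ℤ)*C := by
      have : (0:ℝ) ≤ (z:ℝ) + (k:ℝ)*C := by rw [← hzi]; exact hpos
      exact_mod_cast this
    have hfl : ⌊((k:ℝ) • p) i⌋ = z := by rw [hzi]; exact Int.floor_intCast z
    simp only [hNdef, hfl]
    rw [hzi]
    have h1 : (((z + (k:ℤ)*C).toNat : ℕ) : ℝ) = ((z + (k:ℤ)*C : ℤ) : ℝ) := by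
      exact_mod_cast congrArg (fun t : ℤ => (t:ℝ)) (Int.toNat_of_nonneg hznn)
    rw [h1]
    push_cast
    ring
  set g : (Fin n → ℝ) → Finset (Fin (n+1) → ℝ) :=
    fun u => (Finset.range (N u + 1)).image (fun m : ℕ => (Fin.snoc u (m:ℝ) : Fin (n+1) → ℝ))
    with hgdef
  -- identification of the lattice points of the dilated rooftop
  have hBU : latticePts (n+1) (dilate (n+1) k (rooftop n P (fun u => u i + (C:ℝ))))
      = ↑(F.biUnion g) := by
    rw [dilate_rooftop hk]
    ext w
    simp only [Finset.coe_biUnion, Set.mem_iUnion, Finset.mem_coe, hgdef,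
      Finset.mem_image, Finset.mem_range]
    constructor
    · rintro ⟨⟨v, hv, h, hh0, hhf, rfl⟩, hlat⟩
      have hvlat : isLatticePoint n v := by
        intro j
        obtain ⟨z, hz⟩ := hlat (Fin.castSucc j)
        exact ⟨z, by rw [← hz]; simp [Fin.snoc_castSucc]⟩
      have hvF : v ∈ F := by
        rw [hFdef, Set.Finite.mem_toFinset]; exact ⟨hv, hvlat⟩
      obtain ⟨m', hm'⟩ := hlat (Fin.last n)
      have hhm : h = (m' : ℝ) := by rw [← hm']; simp [Fin.snoc_last]
      have hm'0 : 0 ≤ m' := by exact_mod_cast hhm ▸ hh0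
      have hcast : ((m'.toNat : ℕ) : ℝ) = (m' : ℝ) := by
        exact_mod_cast congrArg (fun t : ℤ => (t:ℝ)) (Int.toNat_of_nonneg hm'0)
      have hle : ((m'.toNat : ℕ) : ℝ) ≤ (N v : ℝ) := by
        rw [hN v hvF, hcast, ← hhm]
        simpa using hhf
      refine ⟨v, hvF, m'.toNat, ?_, ?_⟩
      · have : m'.toNat ≤ N v := by exact_mod_cast hle
        omega
      · rw [hhm]
        rw [hcast]
    · rintro ⟨u, huF, m, hm, rfl⟩
      have huA : u ∈ latticePts n (dilate n k P) := by
        rw [hFdef, Set.Finite.mem_toFinset] at huF; exact huF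
      refine ⟨⟨u, huA.1, (m:ℝ), by positivity, ?_, rfl⟩, ?_⟩
      · show (m:ℝ) ≤ u i + (k:ℝ)*C
        rw [← hN u huF]
        exact_mod_cast Nat.lt_succ_iff.1 hm
      · intro j
        refine Fin.lastCases ?_ (fun j => ?_) j
        · exact ⟨m, by simp [Fin.snoc_last]⟩
        · obtain ⟨z, hz⟩ := huA.2 j
          exact ⟨z, by simp [Fin.snoc_castSucc, hz]⟩
  -- cardinality computation
  have hdisj : ∀ u ∈ F, ∀ v ∈ F, u ≠ v → Disjoint (g u) (g v) := by
    intro u _ v _ huv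
    simp only [Finset.disjoint_left, hgdef, Finset.mem_image, Finset.mem_range]
    rintro w ⟨m, _, rfl⟩ ⟨m', _, hw⟩
    apply huv
    funext j
    have := congrFun hw (Fin.castSucc j)
    simpa [Fin.snoc_castSucc] using this.symm
  have hcard : (F.biUnion g).card = ∑ u ∈ F, (N u + 1) := by
    rw [Finset.card_biUnion hdisj]
    refine Finset.sum_congr rfl fun u _ => ?_
    rw [hgdef]
    simp only
    rw [Finset.card_image_of_injective, Finset.card_range]
    intro a b hab
    have := congrFun hab (Fin.last n)
    simp only [Fin.snoc_last] at this
    exact_mod_cast this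
  have hsum : ((∑ u ∈ F, (N u + 1) : ℕ) : ℝ) = ∑ u ∈ F, (u i + ((k:ℝ)*C + 1)) := by
    push_cast
    refine Finset.sum_congr rfl fun u hu => ?_
    rw [hN u hu]; ring
  rw [hBU, Set.ncard_coe_finset, hcard, hsum, ← hF, finsum_mem_coe_finset,
    Set.ncard_coe_finset, Finset.sum_add_distrib, Finset.sum_const]
  simp only [Finset.sum_apply, nsmul_eq_mul]
  ring

lemma aux_div_tendsto (p q : Polynomial ℝ) (d : ℕ) (hp : p.natDegree ≤ d)
    (hq : q.natDegree = d) (hq0 : q.coeff d ≠ 0) :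
    Tendsto (fun x => p.eval x / q.eval x) atTop (nhds (p.coeff d / q.coeff d)) := by
  have hqne : q ≠ 0 := fun h => hq0 (by simp [h])
  have hqdeg : q.degree = (d : ℕ) := by rw [Polynomial.degree_eq_natDegree hqne, hq]
  have hqlead : q.leadingCoeff = q.coeff d := by rw [Polynomial.leadingCoeff, hq]
  by_cases hpd : p.degree = q.degree
  · have hpne : p ≠ 0 := by
      intro h; rw [h, Polynomial.degree_zero, hqdeg] at hpd; exact (by simp at hpd)
    have hnd : p.natDegree = d := Polynomial.natDegree_eq_of_degree_eq_some (hpd.trans hqdeg)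
    have hplead : p.leadingCoeff = p.coeff d := by rw [Polynomial.leadingCoeff, hnd]
    have := Polynomial.div_tendsto_leadingCoeff_div_of_degree_eq p q hpd
    rwa [hplead, hqlead] at this
  · have hple : p.degree ≤ (d : ℕ) := Polynomial.degree_le_natDegree.trans (by exact_mod_cast hp)
    have hlt : p.degree < q.degree := lt_of_le_of_ne (hqdeg ▸ hple) hpd
    have h0 : p.coeff d = 0 := Polynomial.coeff_eq_zero_of_degree_lt (hqdeg ▸ hlt)
    have := Polynomial.div_tendsto_zero_of_degree_lt p q hlt
    rw [h0, zero_div]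
    exact this


/-- the first-order expansion of the `i`-th coordinate of `Bc_k(P)`:
`Bc_{k,i}(P) → c_{n+1}/a_n − C`, and
`k·(Bc_{k,i}(P) − (c_{n+1}/a_n − C)) → c_n/a_n − c_{n+1}·a_{n−1}/a_n² − 1`,
where `a_j` are the coefficients of the Ehrhart polynomial `E` of `P` and
`c_j` those of the Ehrhart polynomial `E_i` of the rooftop polytope `P_i`. -/
theorem Bck_first_order_expansion
    (n : ℕ) (P : Set (Fin n → ℝ))
    (hP : IsLatticePolytope n P) (hdim : IsFullDim n P)
    (i : Fin n) (C : ℤ) (hC : ∀ u ∈ P, 0 ≤ u i + (C : ℝ))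
    (E Ei : Polynomial ℝ)
    (hEdeg : E.natDegree ≤ n) (hEideg : Ei.natDegree ≤ n + 1)
    (hE : ∀ k : ℕ, 0 < k → E.eval (k : ℝ) = ((latticePts n (dilate n k P)).ncard : ℝ))
    (hEi : ∀ k : ℕ, 0 < k →
      Ei.eval (k : ℝ)
        = ((latticePts (n+1)
            (dilate (n+1) k (rooftop n P (fun u => u i + (C : ℝ))))).ncard : ℝ))
    (han : E.coeff n ≠ 0) :
    Filter.Tendsto (fun k : ℕ => Bck n k P i) Filter.atTop
      (nhds (Ei.coeff (n+1) / E.coeff n - (C : ℝ)))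
    ∧ Filter.Tendsto
        (fun k : ℕ => (k : ℝ) * (Bck n k P i - (Ei.coeff (n+1) / E.coeff n - (C : ℝ))))
        Filter.atTop
        (nhds (Ei.coeff n / E.coeff n
          - Ei.coeff (n+1) * E.coeff (n-1) / (E.coeff n)^2 - 1)) := by
  have hn : 0 < n := i.pos
  have hEn : E.natDegree = n := le_antisymm hEdeg (Polynomial.le_natDegree_of_ne_zero han)
  have hEne : E ≠ 0 := fun h => han (by simp [h])
  set a := E.coeff n with ha
  set c1 := Ei.coeff (n+1) with hc1
  set c0 := Ei.coeff n with hc0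
  set a1 := E.coeff (n-1) with ha1
  -- positivity of E.eval k
  have hEpos : ∀ k : ℕ, 0 < k → 0 < E.eval (k:ℝ) := by
    intro k hk
    rw [hE k hk]
    have hfin : (latticePts n (dilate n k P)).Finite :=
      latticePts_finite_of_bounded (dilate_bounded hP)
    have hne : (latticePts n (dilate n k P)).Nonempty := dilate_lattice_nonempty hP
    exact_mod_cast (Set.ncard_pos hfin).2 hne
  -- the key identity
  have key : ∀ k : ℕ, 0 < k →
      Bck n k P i = Ei.eval (k:ℝ) / ((k:ℝ) * E.eval (k:ℝ)) - (C:ℝ) - 1/(k:ℝ) := by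
    intro k hk
    have hk' : (0:ℝ) < k := by exact_mod_cast hk
    have hc : (0:ℝ) < E.eval (k:ℝ) := hEpos k hk
    have hrc := rooftop_count hP i C hC hk
    rw [← hE k hk, ← hEi k hk] at hrc
    have hfs : (∑ᶠ u ∈ latticePts n (dilate n k P), u) i
        = Ei.eval (k:ℝ) - ((k:ℝ)*C + 1) * E.eval (k:ℝ) := by linarith
    show ((k:ℝ) * ((latticePts n (dilate n k P)).ncard : ℝ))⁻¹
        • (∑ᶠ u ∈ latticePts n (dilate n k P), u) i = _
    rw [← hE k hk, smul_eq_mul, hfs]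
    field_simp
    ring
  -- first limit
  have hXE : (Polynomial.X * E).natDegree = n + 1 := by
    rw [Polynomial.natDegree_mul Polynomial.X_ne_zero hEne, Polynomial.natDegree_X, hEn]
    omega
  have hXEc : (Polynomial.X * E).coeff (n+1) = a := by
    rw [Polynomial.coeff_X_mul]
  have lim1 : Tendsto (fun x : ℝ => Ei.eval x / ((Polynomial.X * E).eval x) - (C:ℝ) - 1/x)
      atTop (nhds (c1 / a - (C:ℝ))) := by
    have h1 := aux_div_tendsto Ei (Polynomial.X * E) (n+1) hEideg hXE (hXEc ▸ han)
    rw [hXEc] at h1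
    have h2 : Tendsto (fun x : ℝ => 1/x) atTop (nhds (0:ℝ)) := by
      simp only [one_div]
      exact tendsto_inv_atTop_zero
    have h3 : Tendsto (fun x : ℝ => Ei.eval x / ((Polynomial.X * E).eval x) - (C:ℝ))
        atTop (nhds (c1 / a - (C:ℝ))) := h1.sub tendsto_const_nhds
    have := h3.sub h2
    simpa using this
  have hcomp : Tendsto (fun k : ℕ => ((k:ℝ))) atTop atTop := tendsto_natCast_atTop_atTop
  have lim1' : Tendsto (fun k : ℕ => Bck n k P i) atTop (nhds (c1 / a - (C:ℝ))) := by
    refine (lim1.comp hcomp).congr' ?_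
    filter_upwards [eventually_gt_atTop 0] with k hk
    simp only [Function.comp_apply, Polynomial.eval_mul, Polynomial.eval_X]
    exact (key k hk).symm
  refine ⟨lim1', ?_⟩
  -- second limit
  set R : Polynomial ℝ := a • Ei - c1 • (Polynomial.X * E) with hR
  set Q : Polynomial ℝ := a • E with hQ
  have hQdeg : Q.natDegree = n := by
    rw [hQ, Polynomial.smul_eq_C_mul, Polynomial.natDegree_C_mul han, hEn]
  have hQc : Q.coeff n = a * a := by rw [hQ, Polynomial.coeff_smul, smul_eq_mul]
  have hQc0 : Q.coeff n ≠ 0 := by rw [hQc]; exact mul_ne_zero han han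
  have hRdeg : R.natDegree ≤ n := by
    rw [Polynomial.natDegree_le_iff_coeff_eq_zero]
    intro m hm
    rw [hR, Polynomial.coeff_sub, Polynomial.coeff_smul, Polynomial.coeff_smul,
      smul_eq_mul, smul_eq_mul]
    rcases Nat.lt_or_ge (n+1) m with h | h
    · rw [Polynomial.coeff_eq_zero_of_natDegree_lt (lt_of_le_of_lt hEideg h)]
      obtain ⟨j, rfl⟩ : ∃ j, m = j + 1 := ⟨m - 1, by omega⟩
      rw [Polynomial.coeff_X_mul,
        Polynomial.coeff_eq_zero_of_natDegree_lt (by omega : E.natDegree < j)]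
      ring
    · have hm1 : m = n + 1 := by omega
      subst hm1
      rw [Polynomial.coeff_X_mul, ← hc1, hEn] at *
      rw [← ha]
      ring
  have hRc : R.coeff n = a * c0 - c1 * a1 := by
    obtain ⟨j, hj⟩ : ∃ j, n = j + 1 := ⟨n - 1, by omega⟩
    rw [hR, Polynomial.coeff_sub, Polynomial.coeff_smul, Polynomial.coeff_smul,
      smul_eq_mul, smul_eq_mul, hj, Polynomial.coeff_X_mul]
    rw [ha1, hj]
    simp [hc0, hj]
  have lim2 : Tendsto (fun x : ℝ => R.eval x / Q.eval x - 1) atTop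
      (nhds (c0 / a - c1 * a1 / a^2 - 1)) := by
    have h1 := aux_div_tendsto R Q n hRdeg hQdeg hQc0
    rw [hRc, hQc] at h1
    have heq : (a * c0 - c1 * a1) / (a * a) = c0 / a - c1 * a1 / a^2 := by
      field_simp
    rw [heq] at h1
    exact h1.sub tendsto_const_nhds
  refine (lim2.comp hcomp).congr' ?_
  filter_upwards [eventually_gt_atTop 0] with k hk
  have hk' : (0:ℝ) < k := by exact_mod_cast hk
  have hc : (0:ℝ) < E.eval (k:ℝ) := hEpos k hk
  simp only [Function.comp_apply]
  rw [key k hk]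
  rw [hR, hQ]
  simp only [Polynomial.eval_sub, Polynomial.eval_smul, Polynomial.eval_mul,
    Polynomial.eval_X, smul_eq_mul]
  field_simp
  ring
end
end

section
/- Let P ⊂ ℝ^n be a reflexive lattice polytope. Then for every positive integer k, kP ∩ ℤ^n = {0} ∪ ⋃_{i=1}^k (∂(iP) ∩ ℤ^n), where ∂ denotes the topological boundary; moreover the sets {0}, ∂P ∩ ℤ^n, ∂(2P) ∩ ℤ^n, …, ∂(kP) ∩ ℤ^n are pairwise disjoint. -/
open scoped BigOperators
open MeasureTheory Polynomial Filter

noncomputable section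

/-- `P` is reflexive w.r.t. the primitive integer vectors `v 1, …, v d`:
each `v i` has coordinates with gcd `1`, and
`P = ⋂ i {u : ⟨u, v i⟩ ≥ −1}`. -/
def IsReflexive (n d : ℕ) (v : Fin d → Fin n → ℤ) (P : Set (Fin n → ℝ)) : Prop :=
  (∀ i, Finset.univ.gcd (v i) = 1) ∧
    P = ⋂ i, {u : Fin n → ℝ | -1 ≤ ∑ j, u j * (v i j : ℝ)}

/-!
For `c > 0` the dilate `c • P` of `P = {u | ∀ j, -1 ≤ ⟨u, v j⟩}` is `{u | ∀ j, -c ≤ ⟨u, v j⟩}`,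
whose interior is cut out by the strict inequalities; as `P` is bounded, its recession cone
`{u | ∀ j, 0 ≤ ⟨u, v j⟩}` is `{0} = 0 • P`. At a lattice point the values `⟨u, v j⟩` are integers,
so a lattice point in the interior of `(i + 1) • P` already lies in `i • P`: a nonzero lattice point
of `k • P` lies on the boundary of the smallest `i • P` containing it. Since `i • P` lies in the
interior of `j • P` for `i < j`, these boundaries are pairwise disjoint, and none contains `0`.
-/

open Set
open scoped Pointwise

section Topological

variable {E ι : Type*} [AddCommGroup E] [Module ℝ E] [TopologicalSpace E]

theorem interior_preimage_Ici_of_neg [ContinuousAdd E] [ContinuousSMul ℝ E]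
    (f : StrongDual ℝ E) {a : ℝ} (ha : a < 0) : interior (f ⁻¹' Ici a) = f ⁻¹' Ioi a := by
  rcases eq_or_ne f 0 with rfl | hf
  · have hIci : (0 : StrongDual ℝ E) ⁻¹' Ici a = univ := eq_univ_of_forall fun _ => ha.le
    have hIoi : (0 : StrongDual ℝ E) ⁻¹' Ioi a = univ := eq_univ_of_forall fun _ => ha
    rw [hIci, hIoi, interior_univ]
  · rw [← (f.isOpenMap_of_ne_zero hf).preimage_interior_eq_interior_preimage f.continuous,
      interior_Ici]

variable (φ : ι → StrongDual ℝ E)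

/-- For `c > 0` this is `c • P` with `P = dilatedPolyhedron φ 1`; for `c = 0` it is the recession
cone of `P`. -/
def dilatedPolyhedron (c : ℝ) : Set E := {u | ∀ j, -c ≤ φ j u}

theorem smul_dilatedPolyhedron_one {c : ℝ} (hc : 0 < c) :
    c • dilatedPolyhedron φ 1 = dilatedPolyhedron φ c := by
  ext u
  rw [mem_smul_set_iff_inv_smul_mem₀ hc.ne']
  simp only [dilatedPolyhedron, mem_ofPred_eq, map_smul, smul_eq_mul]
  refine forall_congr' fun j => ?_
  rw [le_inv_mul_iff₀ hc, mul_neg_one]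

theorem dilatedPolyhedron_mono : Monotone (dilatedPolyhedron φ) :=
  fun _ _ hcc' _ hu j => (neg_le_neg hcc').trans (hu j)

theorem zero_mem_dilatedPolyhedron {c : ℝ} (hc : 0 ≤ c) : 0 ∈ dilatedPolyhedron φ c :=
  fun j => by simpa using hc

theorem isClosed_dilatedPolyhedron (c : ℝ) : IsClosed (dilatedPolyhedron φ c) := by
  simpa only [dilatedPolyhedron, ofPred_forall] using
    isClosed_iInter fun j => isClosed_le continuous_const (φ j).continuous

variable [Finite ι] [ContinuousAdd E] [ContinuousSMul ℝ E]

theorem interior_dilatedPolyhedron {c : ℝ} (hc : 0 < c) :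
    interior (dilatedPolyhedron φ c) = {u | ∀ j, -c < φ j u} := by
  have hinter : dilatedPolyhedron φ c = ⋂ j, φ j ⁻¹' Ici (-c) := by
    ext u
    simp [dilatedPolyhedron]
  rw [hinter, interior_iInter_of_finite]
  simp_rw [interior_preimage_Ici_of_neg _ (neg_neg_of_pos hc)]
  ext u
  simp

theorem dilatedPolyhedron_subset_interior {c c' : ℝ} (hc' : 0 < c') (hcc' : c < c') :
    dilatedPolyhedron φ c ⊆ interior (dilatedPolyhedron φ c') := by
  rw [interior_dilatedPolyhedron φ hc']
  exact fun u hu j => (neg_lt_neg hcc').trans_le (hu j)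

theorem zero_notMem_frontier_dilatedPolyhedron {c : ℝ} (hc : 0 < c) :
    0 ∉ frontier (dilatedPolyhedron φ c) :=
  disjoint_left.1 disjoint_interior_frontier
    (dilatedPolyhedron_subset_interior φ hc hc (zero_mem_dilatedPolyhedron φ le_rfl))

theorem disjoint_frontier_dilatedPolyhedron {c c' : ℝ} (hc : 0 < c) (hc' : 0 < c')
    (hcc' : c ≠ c') :
    Disjoint (frontier (dilatedPolyhedron φ c)) (frontier (dilatedPolyhedron φ c')) := by
  wlog hlt : c < c' generalizing c c'
  · exact (this hc' hc hcc'.symm (hcc'.lt_or_gt.resolve_left hlt)).symm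
  exact disjoint_interior_frontier.mono_left
    (((isClosed_dilatedPolyhedron φ c).frontier_subset).trans
      (dilatedPolyhedron_subset_interior φ hc' hlt))

theorem mem_dilatedPolyhedron_of_mem_interior_succ {u : E} (hu : ∀ j, ∃ m : ℤ, φ j u = m)
    {i : ℕ} (hi : u ∈ interior (dilatedPolyhedron φ (i + 1 : ℕ))) :
    u ∈ dilatedPolyhedron φ i := by
  rw [interior_dilatedPolyhedron φ (by positivity)] at hi
  intro j
  obtain ⟨m, hm⟩ := hu j
  have hlt : -((i : ℤ) + 1) < m := by exact_mod_cast hm ▸ hi j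
  rw [hm]
  exact_mod_cast (by omega : -(i : ℤ) ≤ m)

end Topological

section Normed

variable {E ι : Type*} [NormedAddCommGroup E] [NormedSpace ℝ E] {φ : ι → StrongDual ℝ E}

theorem dilatedPolyhedron_zero_of_isBounded (hb : Bornology.IsBounded (dilatedPolyhedron φ 1)) :
    dilatedPolyhedron φ 0 = {0} := by
  refine subset_antisymm (fun u hu => ?_)
    (singleton_subset_iff.2 (zero_mem_dilatedPolyhedron φ le_rfl))
  by_contra hu0
  have hnorm : 0 < ‖u‖ := norm_pos_iff.2 hu0
  obtain ⟨R, hR⟩ := isBounded_iff_forall_norm_le.1 hb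
  set t : ℝ := (|R| + 1) / ‖u‖
  have ht : 0 ≤ t := by positivity
  have htu : t • u ∈ dilatedPolyhedron φ 1 := fun j => by
    rw [map_smul, smul_eq_mul]
    exact (neg_nonpos.2 zero_le_one).trans (mul_nonneg ht (by simpa using hu j))
  have := hR _ htu
  rw [norm_smul, Real.norm_of_nonneg ht, div_mul_cancel₀ _ hnorm.ne'] at this
  linarith [le_abs_self R]

theorem smul_dilatedPolyhedron_one_of_isBounded
    (hb : Bornology.IsBounded (dilatedPolyhedron φ 1)) {c : ℝ} (hc : 0 ≤ c) :
    c • dilatedPolyhedron φ 1 = dilatedPolyhedron φ c := by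
  rcases hc.eq_or_lt with rfl | hc
  · rw [dilatedPolyhedron_zero_of_isBounded hb,
      zero_smul_set ⟨0, zero_mem_dilatedPolyhedron φ zero_le_one⟩]
    rfl
  · exact smul_dilatedPolyhedron_one φ hc

variable [Finite ι]

theorem exists_mem_frontier_dilatedPolyhedron (hb : Bornology.IsBounded (dilatedPolyhedron φ 1))
    {u : E} (hu : ∀ j, ∃ m : ℤ, φ j u = m) (hu0 : u ≠ 0) :
    ∀ k : ℕ, u ∈ dilatedPolyhedron φ k → ∃ i ∈ Finset.Icc 1 k, u ∈ frontier (dilatedPolyhedron φ i)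
  | 0, huk => by
    rw [Nat.cast_zero, dilatedPolyhedron_zero_of_isBounded hb] at huk
    exact absurd huk hu0
  | k + 1, huk => by
    by_cases hint : u ∈ interior (dilatedPolyhedron φ (k + 1 : ℕ))
    · obtain ⟨i, hi, hfr⟩ := exists_mem_frontier_dilatedPolyhedron hb hu hu0 k
        (mem_dilatedPolyhedron_of_mem_interior_succ φ hu hint)
      exact ⟨i, Finset.Icc_subset_Icc_right k.le_succ hi, hfr⟩
    · refine ⟨k + 1, by simp, ?_⟩
      rw [(isClosed_dilatedPolyhedron φ _).frontier_eq]
      exact ⟨huk, hint⟩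

theorem dilatedPolyhedron_inter_eq (hb : Bornology.IsBounded (dilatedPolyhedron φ 1))
    {Λ : Set E} (h0 : 0 ∈ Λ) (hΛ : ∀ u ∈ Λ, ∀ j, ∃ m : ℤ, φ j u = m) (k : ℕ) :
    dilatedPolyhedron φ k ∩ Λ
      = {0} ∪ ⋃ i ∈ Finset.Icc 1 k, frontier (dilatedPolyhedron φ i) ∩ Λ := by
  apply subset_antisymm
  · rintro u ⟨hu, huΛ⟩
    rcases eq_or_ne u 0 with rfl | hu0
    · exact Or.inl rfl
    · obtain ⟨i, hi, hfr⟩ := exists_mem_frontier_dilatedPolyhedron hb (hΛ u huΛ) hu0 k hu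
      exact Or.inr (mem_iUnion₂.2 ⟨i, hi, hfr, huΛ⟩)
  · rintro u (rfl | hu)
    · exact ⟨zero_mem_dilatedPolyhedron φ k.cast_nonneg, h0⟩
    · obtain ⟨i, hi, hfr, huΛ⟩ := mem_iUnion₂.1 hu
      have hik : (i : ℝ) ≤ k := by exact_mod_cast (Finset.mem_Icc.1 hi).2
      exact ⟨dilatedPolyhedron_mono φ hik
        ((isClosed_dilatedPolyhedron φ _).frontier_subset hfr), huΛ⟩

end Normed

def dotProductDual {σ : Type*} [Fintype σ] (w : σ → ℝ) : StrongDual ℝ (σ → ℝ) :=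
  LinearMap.toContinuousLinearMap ((dotProductBilin ℝ ℝ).flip w)

@[simp]
theorem dotProductDual_apply {σ : Type*} [Fintype σ] (w u : σ → ℝ) :
    dotProductDual w u = u ⬝ᵥ w :=
  rfl

theorem latticePts_eq_inter (n : ℕ) (S : Set (Fin n → ℝ)) :
    latticePts n S = S ∩ {u | isLatticePoint n u} :=
  rfl

theorem isLatticePoint.exists_dotProduct_intCast_eq {n : ℕ} {u : Fin n → ℝ}
    (hu : isLatticePoint n u) (z : Fin n → ℤ) : ∃ m : ℤ, u ⬝ᵥ (fun j => (z j : ℝ)) = m := by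
  choose a ha using hu
  refine ⟨a ⬝ᵥ z, ?_⟩
  simp [dotProduct, ha]

theorem IsLatticePolytope.isBounded {n : ℕ} {P : Set (Fin n → ℝ)} (hP : IsLatticePolytope n P) :
    Bornology.IsBounded P := by
  obtain ⟨V, -, -, rfl⟩ := hP
  exact (V.finite_toSet.isCompact_convexHull (𝕜 := ℝ)).isBounded

theorem IsReflexive.eq_dilatedPolyhedron {n d : ℕ} {v : Fin d → Fin n → ℤ} {P : Set (Fin n → ℝ)}
    (href : IsReflexive n d v P) :
    P = dilatedPolyhedron (fun i => dotProductDual fun j => (v i j : ℝ)) 1 := by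
  rw [href.2]
  ext u
  simp [dilatedPolyhedron, dotProduct]

theorem reflexive_shell_decomposition_general
    (n d : ℕ) (v : Fin d → Fin n → ℤ) (P : Set (Fin n → ℝ))
    (hP : IsLatticePolytope n P)
    (href : IsReflexive n d v P)
    (k : ℕ) :
    (latticePts n (dilate n k P)
        = {0} ∪ ⋃ i ∈ Finset.Icc 1 k, latticePts n (frontier (dilate n i P)))
    ∧ (∀ i ∈ Finset.Icc 1 k, (0 : Fin n → ℝ) ∉ latticePts n (frontier (dilate n i P)))
    ∧ (∀ i ∈ Finset.Icc 1 k, ∀ j ∈ Finset.Icc 1 k, i ≠ j →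
        Disjoint (latticePts n (frontier (dilate n i P)))
          (latticePts n (frontier (dilate n j P)))) := by
  set φ : Fin d → StrongDual ℝ (Fin n → ℝ) := fun i => dotProductDual fun j => (v i j : ℝ)
  obtain rfl : P = dilatedPolyhedron φ 1 := href.eq_dilatedPolyhedron
  have hb := hP.isBounded
  have hdilate (i : ℕ) : dilate n i (dilatedPolyhedron φ 1) = dilatedPolyhedron φ i := by
    rw [dilate, image_smul, smul_dilatedPolyhedron_one_of_isBounded hb i.cast_nonneg]
  have hintegral : ∀ u ∈ {u | isLatticePoint n u}, ∀ j, ∃ m : ℤ, φ j u = m :=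
    fun u hu j => hu.exists_dotProduct_intCast_eq (v j)
  have hpos {i : ℕ} (hi : i ∈ Finset.Icc 1 k) : (0 : ℝ) < i := by
    exact_mod_cast (Finset.mem_Icc.1 hi).1
  simp only [hdilate, latticePts_eq_inter]
  refine ⟨dilatedPolyhedron_inter_eq hb (fun _ => ⟨0, by simp⟩) hintegral k,
    fun i hi h0 => zero_notMem_frontier_dilatedPolyhedron φ (hpos hi) h0.1,
    fun i hi j hj hij => ?_⟩
  exact (disjoint_frontier_dilatedPolyhedron φ (hpos hi) (hpos hj) (by exact_mod_cast hij)).mono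
    inter_subset_left inter_subset_left

/-- for a reflexive lattice polytope,
`kP ∩ ℤ^n = {0} ∪ ⋃_{i=1}^k (∂(iP) ∩ ℤ^n)`, and the sets
`{0}, ∂P ∩ ℤ^n, …, ∂(kP) ∩ ℤ^n` are pairwise disjoint. -/
theorem reflexive_shell_decomposition
    (n d : ℕ) (v : Fin d → Fin n → ℤ) (P : Set (Fin n → ℝ))
    (hP : IsLatticePolytope n P) (hdim : IsFullDim n P)
    (href : IsReflexive n d v P)
    (k : ℕ) (hk : 0 < k) :
    (latticePts n (dilate n k P)
        = {0} ∪ ⋃ i ∈ Finset.Icc 1 k, latticePts n (frontier (dilate n i P)))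
    ∧ (∀ i ∈ Finset.Icc 1 k, (0 : Fin n → ℝ) ∉ latticePts n (frontier (dilate n i P)))
    ∧ (∀ i ∈ Finset.Icc 1 k, ∀ j ∈ Finset.Icc 1 k, i ≠ j →
        Disjoint (latticePts n (frontier (dilate n i P)))
          (latticePts n (frontier (dilate n j P)))) :=
  reflexive_shell_decomposition_general n d v P hP href k
end
end
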